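/- arXiv:2201.11055 — 3 statements merged into one kernel-verified Lean document; each statement's English description precedes it below -/
import Mathlib

section
/- Let p be a polynomial of degree at least 2 and let α be a root of p of multiplicity k. Then the Chebyshev iteration map C_p(z) = z - (1 + L_p(z)/2)·p(z)/p'(z), where L_p(z) = p(z)p''(z)/p'(z)², satisfies C_p(α) = α and C_p'(α) = (k-1)(2k-1)/(2k²). In particular, if k = 1 then C_p'(α) = 0. -/
/-!
Write `p = (X - α) ^ (n + 1) * g` with `g(α) ≠ 0`. Then `p' = (X - α) ^ n * A` with
`A = (n + 1) g + (X - α) g'` and `p p'' = (X - α) ^ (2n) * g (n A + (X - α) A')`, so after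
cancelling the powers of `z - α` the map `C_p` agrees near `α` with
`z - (1 + g (n A + (z - α) A') / (2 A²)) · (z - α) g / A`, which is holomorphic at `α`.
Its derivative at `α` is `1 - (1 + n / (2 (n + 1))) / (n + 1)`, because `A(α) = (n + 1) g(α)`.
-/

open Polynomial Filter Topology

noncomputable def Cheb (p : ℂ[X]) (z : ℂ) : ℂ :=
  z - (1 + (p.eval z * (derivative (derivative p)).eval z) /
        (2 * ((derivative p).eval z) ^ 2)) * (p.eval z / (derivative p).eval z)

section Cofactor

variable {R : Type*} [CommRing R] (a : R) (g : R[X]) (n : ℕ)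

noncomputable def derivCofactor : R[X] :=
  C ((n : R) + 1) * g + (X - C a) * derivative g

theorem eval_derivCofactor_self : (derivCofactor a g n).eval a = ((n : R) + 1) * g.eval a := by
  simp [derivCofactor]

theorem eval_derivCofactor_self_ne_zero [NoZeroDivisors R] [CharZero R] {a : R} {g : R[X]}
    (n : ℕ) (hg : g.eval a ≠ 0) : (derivCofactor a g n).eval a ≠ 0 := by
  rw [eval_derivCofactor_self]
  exact mul_ne_zero (mod_cast n.succ_ne_zero) hg

theorem derivative_X_sub_C_pow_succ_mul :
    derivative ((X - C a) ^ (n + 1) * g) = (X - C a) ^ n * derivCofactor a g n := by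
  rw [derivCofactor, derivative_mul, derivative_pow, derivative_X_sub_C]
  push_cast
  ring

theorem X_sub_C_pow_succ_mul_mul_derivative_derivative :
    (X - C a) ^ (n + 1) * g * derivative (derivative ((X - C a) ^ (n + 1) * g)) =
      (X - C a) ^ (2 * n) * (g * (C (n : R) * derivCofactor a g n +
        (X - C a) * derivative (derivCofactor a g n))) := by
  rw [derivative_X_sub_C_pow_succ_mul, derivative_mul, derivative_pow, derivative_X_sub_C]
  rcases n with _ | n
  · simp only [Nat.cast_zero, zero_mul, C_0, zero_add]
    ring
  · simp only [Nat.add_sub_cancel]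
    ring

end Cofactor

theorem HasDerivAt.id_sub_mul_sub_const_mul {𝕜 : Type*} [NontriviallyNormedField 𝕜]
    {h q : 𝕜 → 𝕜} {a : 𝕜} (hh : DifferentiableAt 𝕜 h a) (hq : DifferentiableAt 𝕜 q a) :
    HasDerivAt (fun z => z - h z * ((z - a) * q z)) (1 - h a * q a) a := by
  simpa using (hasDerivAt_id' a).fun_sub
    (hh.hasDerivAt.fun_mul (((hasDerivAt_id' a).sub_const a).fun_mul hq.hasDerivAt))

-- At a multiple root `p'(z) = 0` as well, and Lean's `x / 0 = 0` still makes `z` fixed.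
theorem Cheb_eq_self_of_isRoot {p : ℂ[X]} {z : ℂ} (h : p.IsRoot z) : Cheb p z = z := by
  simp [Cheb, h.eq_zero]

noncomputable def chebModel (α : ℂ) (g : ℂ[X]) (n : ℕ) (z : ℂ) : ℂ :=
  z - (1 + (g * (C (n : ℂ) * derivCofactor α g n +
      (X - C α) * derivative (derivCofactor α g n))).eval z /
      (2 * (derivCofactor α g n).eval z ^ 2)) *
    ((z - α) * (g.eval z / (derivCofactor α g n).eval z))

theorem Cheb_X_sub_C_pow_succ_mul_eq_chebModel_of_ne {α z : ℂ} (g : ℂ[X]) (n : ℕ) (hz : z ≠ α)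
    (hA : (derivCofactor α g n).eval z ≠ 0) :
    Cheb ((X - C α) ^ (n + 1) * g) z = chebModel α g n z := by
  have hzα : (z - α) ^ n ≠ 0 := pow_ne_zero _ (sub_ne_zero.mpr hz)
  rw [Cheb, chebModel, ← eval_mul, X_sub_C_pow_succ_mul_mul_derivative_derivative,
    derivative_X_sub_C_pow_succ_mul]
  simp only [eval_mul, eval_pow, eval_sub, eval_X, eval_C]
  field_simp
  ring

theorem Cheb_X_sub_C_pow_succ_mul_eventuallyEq_chebModel {α : ℂ} {g : ℂ[X]} (n : ℕ)
    (hg : g.eval α ≠ 0) : Cheb ((X - C α) ^ (n + 1) * g) =ᶠ[𝓝 α] chebModel α g n := by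
  filter_upwards [(derivCofactor α g n).continuousAt.eventually_ne
    (eval_derivCofactor_self_ne_zero n hg)] with z hz
  rcases eq_or_ne z α with rfl | hzα
  · rw [Cheb_eq_self_of_isRoot (by simp), chebModel, sub_self, zero_mul, mul_zero, sub_zero]
  · exact Cheb_X_sub_C_pow_succ_mul_eq_chebModel_of_ne g n hzα hz

theorem hasDerivAt_chebModel {α : ℂ} {g : ℂ[X]} (n : ℕ) (hg : g.eval α ≠ 0) :
    HasDerivAt (chebModel α g n) (n * (2 * n + 1) / (2 * (n + 1) ^ 2)) α := by
  set A := derivCofactor α g n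
  set M := g * (C (n : ℂ) * A + (X - C α) * derivative A)
  have hA : A.eval α ≠ 0 := eval_derivCofactor_self_ne_zero n hg
  have hM : M.eval α = n * A.eval α * g.eval α := by
    simp [M]
    ring
  refine (HasDerivAt.id_sub_mul_sub_const_mul (h := fun z => 1 + M.eval z / (2 * A.eval z ^ 2))
    (by fun_prop (disch := simpa using hA)) (by fun_prop (disch := exact hA))).congr_deriv ?_
  rw [hM, eval_derivCofactor_self]
  field_simp
  ring

theorem chebyshev_fixed_point_multiplier_at_root_general
    (p g : ℂ[X]) (k : ℕ) (α : ℂ) (hk : 1 ≤ k)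
    (hp : p = (X - C α) ^ k * g) (hg : g.eval α ≠ 0) :
    Cheb p α = α ∧
    deriv (Cheb p) α = ((k : ℂ) - 1) * (2 * (k : ℂ) - 1) / (2 * (k : ℂ) ^ 2) ∧
    (k = 1 → deriv (Cheb p) α = 0) := by
  obtain ⟨n, rfl⟩ := Nat.exists_eq_add_of_le' hk
  subst hp
  have hderiv : deriv (Cheb ((X - C α) ^ (n + 1) * g)) α =
      ((↑(n + 1) : ℂ) - 1) * (2 * (↑(n + 1) : ℂ) - 1) / (2 * (↑(n + 1) : ℂ) ^ 2) := by
    rw [((hasDerivAt_chebModel n hg).congr_of_eventuallyEq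
      (Cheb_X_sub_C_pow_succ_mul_eventuallyEq_chebModel n hg)).deriv]
    push_cast
    ring
  refine ⟨Cheb_eq_self_of_isRoot (by simp), hderiv, fun hk1 => ?_⟩
  rw [hderiv, hk1]
  norm_num

theorem chebyshev_fixed_point_multiplier_at_root
    (p g : ℂ[X]) (k : ℕ) (α : ℂ) (hk : 1 ≤ k)
    (hdeg : 2 ≤ p.natDegree)
    (hp : p = (X - C α) ^ k * g) (hg : g.eval α ≠ 0) :
    Cheb p α = α ∧
    deriv (Cheb p) α = ((k : ℂ) - 1) * (2 * (k : ℂ) - 1) / (2 * (k : ℂ) ^ 2) ∧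
    (k = 1 → deriv (Cheb p) α = 0) :=
  chebyshev_fixed_point_multiplier_at_root_general p g k α hk hp hg
end

section
/- The derivative of the Chebyshev's method satisfies C_p'(z) = (L_p(z)²/2)·(3 - L_{p'}(z)), where L_q(z) = q(z)q''(z)/q'(z)² for a polynomial q. -/
open Polynomial

/-- `L_q(z) = q(z)q''(z)/q'(z)²`. -/
noncomputable def Lfun (q : ℂ[X]) (z : ℂ) : ℂ :=
  (q.eval z * (derivative (derivative q)).eval z) / ((derivative q).eval z) ^ 2

theorem chebyshev_derivative_formula (p : ℂ[X]) (hdeg : 2 ≤ p.natDegree) (z : ℂ)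
    (h1 : (derivative p).eval z ≠ 0)
    (h2 : (derivative (derivative p)).eval z ≠ 0) :
    deriv (Cheb p) z = (Lfun p z) ^ 2 / 2 * (3 - Lfun (derivative p) z) := by
  set a := p.eval z with ha
  set b := (derivative p).eval z with hb
  set c := (derivative (derivative p)).eval z with hc
  set d := (derivative (derivative (derivative p))).eval z with hd
  have hA : HasDerivAt (fun z => p.eval z) b z := p.hasDerivAt z
  have hB : HasDerivAt (fun z => (derivative p).eval z) c z := (derivative p).hasDerivAt z
  have hC : HasDerivAt (fun z => (derivative (derivative p)).eval z) d z :=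
    (derivative (derivative p)).hasDerivAt z
  have hden : (2 : ℂ) * b ^ 2 ≠ 0 := by
    simp [pow_ne_zero, h1]
  have h := (hasDerivAt_id z).sub
    ((((hasDerivAt_const z (1 : ℂ)).add
      ((hA.mul hC).div ((hB.pow 2).const_mul 2) hden)).mul (hA.div hB h1)))
  have hderiv : deriv (Cheb p) z =
      1 - ((0 + ((b * c + a * d) * (2 * b ^ 2) - a * c * (2 * (((2:ℕ):ℂ) * b ^ (2-1) * c)))
          / (2 * b ^ 2) ^ 2) * (a / b)
        + (1 + a * c / (2 * b ^ 2)) * ((b * b - a * c) / b ^ 2)) := h.deriv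
  rw [hderiv, Lfun, Lfun, ← ha, ← hb, ← hc, ← hd]
  field_simp
  ring
end

section
/- Let λ ∈ [-1, 1) and let α_λ be the unique real root of q(z) = 4z³ - (4/√(5-λ))z² + ((49-9λ)/(5-λ))z + 3√(5-λ), and let ζ, ζ̄ be the two non-real roots of q. Then |ζ|² = -3√(5-λ)/(4α_λ), and since -2/√(5-λ) < α_λ < -1/√(5-λ), one gets 3(5-λ)/8 < |ζ|² < 3(5-λ)/4, hence 3/2 < |ζ|² < 9/2 and |5 - 1/ζ²| ≥ 5 - 1/|ζ|² > 13/3. In particular the two non-real extraneous fixed points of C_λ are repelling (multiplier modulus > 1). -/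
/-!
Evaluating the factorization `q(z) = 4(z - α)(z - ζ)(z - ζ̄)` at `z = 0` gives
`3√(5-λ) = -4α|ζ|²`. Writing `s = √(5-λ)`, the bounds on `α` say `1 < -αs < 2`, so
`|ζ|² = 3s² / (4(-αs))` lies strictly between `3s²/8` and `3s²/4`, i.e. between `3/2` and `9/2`
for `λ ∈ [-1, 1)`. Then `|5 - 1/ζ²| ≥ 5 - 1/|ζ|² > 5 - 2/3`.
-/

open Complex ComplexConjugate

lemma const_eq_neg_mul_mul_norm_sq_of_forall_eq {a d α : ℝ} {b c ζ : ℂ}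
    (h : ∀ z : ℂ, (a : ℂ) * z ^ 3 + b * z ^ 2 + c * z + d
      = a * (z - α) * (z - ζ) * (z - conj ζ)) :
    d = -a * α * ‖ζ‖ ^ 2 := by
  have h0 : (d : ℂ) = -a * α * (ζ * conj ζ) := by linear_combination h 0
  rw [mul_conj, normSq_eq_norm_sq] at h0
  exact_mod_cast h0

lemma norm_sq_bounds_of_const_eq {s α A : ℝ} (hs : 0 < s) (hA : 3 * s = -4 * α * A)
    (hα : -2 / s < α ∧ α < -1 / s) :
    A = -3 * s / (4 * α) ∧ 3 * s ^ 2 / 8 < A ∧ A < 3 * s ^ 2 / 4 := by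
  obtain ⟨hlo, hhi⟩ := hα
  have hαs_lo : -2 < α * s := (div_lt_iff₀ hs).mp hlo
  have hαs_hi : α * s < -1 := (lt_div_iff₀ hs).mp hhi
  have hα0 : α < 0 := by nlinarith
  have hA0 : 0 < A := by nlinarith
  have hAs : 3 * s ^ 2 = 4 * (-(α * s)) * A := by linear_combination s * hA
  refine ⟨?_, by nlinarith, by nlinarith⟩
  rw [eq_div_iff (by linarith)]
  linear_combination hA

lemma norm_sub_inv_lt_norm_sub_one_div_sq (c ζ : ℂ) {r : ℝ} (hr : 0 < r) (h : r < ‖ζ‖ ^ 2) :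
    ‖c‖ - r⁻¹ < ‖c - 1 / ζ ^ 2‖ :=
  calc ‖c‖ - r⁻¹ < ‖c‖ - (‖ζ‖ ^ 2)⁻¹ := by gcongr
    _ = ‖c‖ - ‖1 / ζ ^ 2‖ := by rw [norm_div, norm_one, norm_pow, one_div]
    _ ≤ ‖c - 1 / ζ ^ 2‖ := norm_sub_norm_le c _

theorem nonreal_extraneous_fixed_points_repelling_general (lam : ℝ)
    (hlam : lam ∈ Set.Ico (-1 : ℝ) 1)
    (α : ℝ) (ζ : ℂ)
    (hfact : ∀ z : ℂ,
      4 * z ^ 3 - (4 / (Real.sqrt (5 - lam) : ℂ)) * z ^ 2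
          + (((49 - 9 * lam) / (5 - lam) : ℝ) : ℂ) * z + 3 * (Real.sqrt (5 - lam) : ℂ)
        = 4 * (z - (α : ℂ)) * (z - ζ) * (z - (starRingEnd ℂ) ζ))
    (hα : -2 / Real.sqrt (5 - lam) < α ∧ α < -1 / Real.sqrt (5 - lam)) :
    ‖ζ‖ ^ 2 = -3 * Real.sqrt (5 - lam) / (4 * α) ∧
    3 * (5 - lam) / 8 < ‖ζ‖ ^ 2 ∧
    ‖ζ‖ ^ 2 < 3 * (5 - lam) / 4 ∧
    3 / 2 < ‖ζ‖ ^ 2 ∧ ‖ζ‖ ^ 2 < 9 / 2 ∧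
    13 / 3 < ‖5 - 1 / ζ ^ 2‖ := by
  obtain ⟨hlam_lo, hlam_hi⟩ := hlam
  have h5 : (0 : ℝ) < 5 - lam := by linarith
  have hs := Real.sqrt_pos.mpr h5
  have hconst : 3 * Real.sqrt (5 - lam) = -4 * α * ‖ζ‖ ^ 2 :=
    const_eq_neg_mul_mul_norm_sq_of_forall_eq (a := 4) (α := α) (ζ := ζ)
      (b := -(4 / (Real.sqrt (5 - lam) : ℂ))) (c := (((49 - 9 * lam) / (5 - lam) : ℝ) : ℂ))
      fun z => by have := hfact z; push_cast at this ⊢; linear_combination this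
  obtain ⟨hnorm, hlo, hhi⟩ := norm_sq_bounds_of_const_eq hs hconst hα
  rw [Real.sq_sqrt h5.le] at hlo hhi
  have hlo' : 3 / 2 < ‖ζ‖ ^ 2 := by linarith
  refine ⟨hnorm, hlo, hhi, hlo', by linarith, ?_⟩
  calc (13 / 3 : ℝ) = ‖(5 : ℂ)‖ - (3 / 2)⁻¹ := by norm_num
    _ < ‖5 - 1 / ζ ^ 2‖ := norm_sub_inv_lt_norm_sub_one_div_sq 5 ζ (by norm_num) hlo'

theorem nonreal_extraneous_fixed_points_repelling (lam : ℝ)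
    (hlam : lam ∈ Set.Ico (-1 : ℝ) 1)
    (α : ℝ) (ζ : ℂ) (hζ : ζ.im ≠ 0)
    (hfact : ∀ z : ℂ,
      4 * z ^ 3 - (4 / (Real.sqrt (5 - lam) : ℂ)) * z ^ 2
          + (((49 - 9 * lam) / (5 - lam) : ℝ) : ℂ) * z + 3 * (Real.sqrt (5 - lam) : ℂ)
        = 4 * (z - (α : ℂ)) * (z - ζ) * (z - (starRingEnd ℂ) ζ))
    (hα : -2 / Real.sqrt (5 - lam) < α ∧ α < -1 / Real.sqrt (5 - lam)) :
    ‖ζ‖ ^ 2 = -3 * Real.sqrt (5 - lam) / (4 * α) ∧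
    3 * (5 - lam) / 8 < ‖ζ‖ ^ 2 ∧
    ‖ζ‖ ^ 2 < 3 * (5 - lam) / 4 ∧
    3 / 2 < ‖ζ‖ ^ 2 ∧ ‖ζ‖ ^ 2 < 9 / 2 ∧
    13 / 3 < ‖5 - 1 / ζ ^ 2‖ :=
  nonreal_extraneous_fixed_points_repelling_general lam hlam α ζ hfact hα
end
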